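/- arXiv:1903.10593 — 3 statements merged into one kernel-verified Lean document; each statement's English description precedes it below -/
import Mathlib

section
/- The map f : H → M₂(ℂ) sending q = a + b·i + c·j + d·k to (1/2)·[[a+c, d+i·b],[d−i·b, a−c]] is an injective real-linear map whose image is exactly the set of 2×2 complex Hermitian matrices, and f(q) is positive semi-definite if and only if q lies in the cone H_S = {q : Re q ≥ 0 and |Im q|² ≤ (Re q)²}. -/
/-!
Under `f`, the trace of `f q` is `Re q` and its determinant is `((Re q)² - |Im q|²) / 4`.
A Hermitian `2 × 2` matrix is positive semidefinite iff its trace and determinant are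
nonnegative, since these are the sum and the product of its two real eigenvalues; for `f q`
these two conditions say exactly that `q ∈ HS`.
-/

open Quaternion
open scoped ComplexOrder

def HS : Set ℍ[ℝ] := {q | 0 ≤ q.re ∧ ‖q.im‖ ^ 2 ≤ q.re ^ 2}

noncomputable def f (q : ℍ[ℝ]) : Matrix (Fin 2) (Fin 2) ℂ :=
  (1/2 : ℂ) •
    !![(q.re : ℂ) + q.imJ, (q.imK : ℂ) + Complex.I * q.imI;
       (q.imK : ℂ) - Complex.I * q.imI, (q.re : ℂ) - q.imJ]

namespace Matrix

theorem IsHermitian.posSemidef_iff_trace_nonneg_and_det_nonneg {𝕜 : Type*} [RCLike 𝕜]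
    {A : Matrix (Fin 2) (Fin 2) 𝕜} (hA : A.IsHermitian) :
    A.PosSemidef ↔ 0 ≤ A.trace ∧ 0 ≤ A.det := by
  refine ⟨fun h => ⟨h.trace_nonneg, h.det_nonneg⟩, fun ⟨htr, hdet⟩ => ?_⟩
  rw [hA.trace_eq_sum_eigenvalues, Fin.sum_univ_two, ← RCLike.ofReal_add,
    RCLike.ofReal_nonneg] at htr
  rw [hA.det_eq_prod_eigenvalues, Fin.prod_univ_two, ← RCLike.ofReal_mul,
    RCLike.ofReal_nonneg] at hdet
  rw [hA.posSemidef_iff_eigenvalues_nonneg, Pi.le_def, Fin.forall_fin_two]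
  constructor <;> simp only [Pi.zero_apply] <;> nlinarith

end Matrix

namespace Quaternion

lemma norm_im_sq (q : ℍ[ℝ]) : ‖q.im‖ ^ 2 = q.imI ^ 2 + q.imJ ^ 2 + q.imK ^ 2 := by
  rw [sq, ← normSq_eq_norm_mul_self, normSq_def']
  simp

end Quaternion

lemma f_add (q q' : ℍ[ℝ]) : f (q + q') = f q + f q' := by
  ext i j
  fin_cases i <;> fin_cases j <;> simp [f] <;> ring

lemma f_smul (r : ℝ) (q : ℍ[ℝ]) : f (r • q) = (r : ℂ) • f q := by
  ext i j
  fin_cases i <;> fin_cases j <;> simp [f] <;> ring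

lemma isHermitian_f (q : ℍ[ℝ]) : (f q).IsHermitian := by
  ext i j
  fin_cases i <;> fin_cases j <;> simp [f, Complex.ext_iff]

lemma trace_f (q : ℍ[ℝ]) : (f q).trace = q.re := by
  simp only [f, Matrix.trace_fin_two, Matrix.smul_apply, Matrix.of_apply, Matrix.cons_val',
    Matrix.cons_val_zero, Matrix.cons_val_fin_one, Matrix.cons_val_one, smul_eq_mul]
  ring

lemma det_f (q : ℍ[ℝ]) : (f q).det = ((q.re ^ 2 - ‖q.im‖ ^ 2) / 4 : ℝ) := by
  rw [Quaternion.norm_im_sq, Matrix.det_fin_two]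
  simp only [f, one_div, Matrix.smul_apply, Matrix.of_apply, Matrix.cons_val',
    Matrix.cons_val_zero, Matrix.cons_val_fin_one, smul_eq_mul, Matrix.cons_val_one,
    Complex.ofReal_div, Complex.ofReal_sub, Complex.ofReal_pow, Complex.ofReal_add,
    Complex.ofReal_ofNat]
  linear_combination ((q.imI : ℂ) ^ 2 / 4) * Complex.I_sq

noncomputable def fInv (A : Matrix (Fin 2) (Fin 2) ℂ) : ℍ[ℝ] :=
  ⟨(A 0 0 + A 1 1).re, 2 * (A 0 1).im, (A 0 0 - A 1 1).re, 2 * (A 0 1).re⟩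

lemma fInv_f (q : ℍ[ℝ]) : fInv (f q) = q := by
  ext <;> simp [fInv, f] <;> ring

lemma f_fInv {A : Matrix (Fin 2) (Fin 2) ℂ} (hA : A.IsHermitian) : f (fInv A) = A := by
  have h00 : (A 0 0).im = 0 := Complex.conj_eq_iff_im.mp (hA.apply 0 0)
  have h11 : (A 1 1).im = 0 := Complex.conj_eq_iff_im.mp (hA.apply 1 1)
  have h10 : A 1 0 = star (A 0 1) := (hA.apply 1 0).symm
  ext i j
  fin_cases i <;> fin_cases j <;> simp [f, fInv, Complex.ext_iff, h00, h11, h10] <;> ring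

lemma range_f : Set.range f = {A | A.IsHermitian} :=
  Set.ext fun A => ⟨by rintro ⟨q, rfl⟩; exact isHermitian_f q, fun hA => ⟨fInv A, f_fInv hA⟩⟩

lemma posSemidef_f_iff (q : ℍ[ℝ]) : (f q).PosSemidef ↔ q ∈ HS := by
  rw [(isHermitian_f q).posSemidef_iff_trace_nonneg_and_det_nonneg, trace_f, det_f,
    Complex.zero_le_real, Complex.zero_le_real]
  constructor <;> rintro ⟨h1, h2⟩ <;> constructor <;> linarith

theorem stmt_4 :
    Function.Injective f ∧
    (∀ q q' : ℍ[ℝ], f (q + q') = f q + f q') ∧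
    (∀ (r : ℝ) (q : ℍ[ℝ]), f (r • q) = (r : ℂ) • f q) ∧
    Set.range f = {A : Matrix (Fin 2) (Fin 2) ℂ | A.IsHermitian} ∧
    (∀ q : ℍ[ℝ], (f q).PosSemidef ↔ q ∈ HS) :=
  ⟨Function.LeftInverse.injective fInv_f, f_add, f_smul, range_f, posSemidef_f_iff⟩
end

section
/- For quaternions w₁ = I₁ + I₁Φ₁μ₁ and w₂ = I₂ + I₂Φ₂μ₂ with I₁, I₂ ≥ 0 real, Φ₁, Φ₂ ∈ [0,1] real, and μ₁, μ₂ pure unit quaternions, and for a real parameter α, the quaternion (1−α)w₁ + α·w₂ satisfies |Im((1−α)w₁ + αw₂)|² ≤ (Re((1−α)w₁ + αw₂))² if and only if α²[I₁²(1−Φ₁²) + I₂²(1−Φ₂²) − 2I₁I₂(1−Φ₁Φ₂⟨μ₁,μ₂⟩)] + 2α[I₁I₂(1−Φ₁Φ₂⟨μ₁,μ₂⟩) − I₁²(1−Φ₁²)] + I₁²(1−Φ₁²) ≥ 0, where ⟨μ₁,μ₂⟩ = −Re(μ₁μ₂). -/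
open Quaternion

theorem stmt_10 (I₁ I₂ Φ₁ Φ₂ : ℝ) (μ₁ μ₂ : ℍ[ℝ])
    (hI₁ : 0 ≤ I₁) (hI₂ : 0 ≤ I₂)
    (hΦ₁ : Φ₁ ∈ Set.Icc (0 : ℝ) 1) (hΦ₂ : Φ₂ ∈ Set.Icc (0 : ℝ) 1)
    (hμ₁re : μ₁.re = 0) (hμ₁ : ‖μ₁‖ = 1)
    (hμ₂re : μ₂.re = 0) (hμ₂ : ‖μ₂‖ = 1)
    (w₁ w₂ : ℍ[ℝ])
    (hw₁ : w₁ = (I₁ : ℍ[ℝ]) + (I₁ * Φ₁) • μ₁)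
    (hw₂ : w₂ = (I₂ : ℍ[ℝ]) + (I₂ * Φ₂) • μ₂)
    (α : ℝ) :
    ‖((1 - α) • w₁ + α • w₂).im‖ ^ 2 ≤ (((1 - α) • w₁ + α • w₂).re) ^ 2 ↔
      0 ≤ α ^ 2 * (I₁ ^ 2 * (1 - Φ₁ ^ 2) + I₂ ^ 2 * (1 - Φ₂ ^ 2)
            - 2 * I₁ * I₂ * (1 - Φ₁ * Φ₂ * (-(μ₁ * μ₂).re)))
        + 2 * α * (I₁ * I₂ * (1 - Φ₁ * Φ₂ * (-(μ₁ * μ₂).re))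
            - I₁ ^ 2 * (1 - Φ₁ ^ 2))
        + I₁ ^ 2 * (1 - Φ₁ ^ 2) := by
  have h1 : μ₁.re ^ 2 + μ₁.imI ^ 2 + μ₁.imJ ^ 2 + μ₁.imK ^ 2 = 1 := by
    have : Quaternion.normSq μ₁ = 1 := by
      rw [Quaternion.normSq_eq_norm_mul_self, hμ₁]; ring
    simpa [Quaternion.normSq_def', sq] using this
  have h2 : μ₂.re ^ 2 + μ₂.imI ^ 2 + μ₂.imJ ^ 2 + μ₂.imK ^ 2 = 1 := by
    have : Quaternion.normSq μ₂ = 1 := by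
      rw [Quaternion.normSq_eq_norm_mul_self, hμ₂]; ring
    simpa [Quaternion.normSq_def', sq] using this
  have hnorm : ‖((1 - α) • w₁ + α • w₂).im‖ ^ 2
      = ((1 - α) • w₁ + α • w₂).imI ^ 2 + ((1 - α) • w₁ + α • w₂).imJ ^ 2
        + ((1 - α) • w₁ + α • w₂).imK ^ 2 := by
    rw [sq, ← Quaternion.normSq_eq_norm_mul_self]
    simp [Quaternion.normSq_def', sq]
  rw [hnorm, ← sub_nonneg]
  have key : (((1 - α) • w₁ + α • w₂).re) ^ 2
      - (((1 - α) • w₁ + α • w₂).imI ^ 2 + ((1 - α) • w₁ + α • w₂).imJ ^ 2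
        + ((1 - α) • w₁ + α • w₂).imK ^ 2)
      = α ^ 2 * (I₁ ^ 2 * (1 - Φ₁ ^ 2) + I₂ ^ 2 * (1 - Φ₂ ^ 2)
            - 2 * I₁ * I₂ * (1 - Φ₁ * Φ₂ * (-(μ₁ * μ₂).re)))
        + 2 * α * (I₁ * I₂ * (1 - Φ₁ * Φ₂ * (-(μ₁ * μ₂).re))
            - I₁ ^ 2 * (1 - Φ₁ ^ 2))
        + I₁ ^ 2 * (1 - Φ₁ ^ 2) := by
    subst hw₁ hw₂
    have h1' : μ₁.imI ^ 2 + μ₁.imJ ^ 2 + μ₁.imK ^ 2 = 1 := by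
      nlinarith [h1, hμ₁re]
    have h2' : μ₂.imI ^ 2 + μ₂.imJ ^ 2 + μ₂.imK ^ 2 = 1 := by
      nlinarith [h2, hμ₂re]
    simp [Quaternion.re_mul, hμ₁re, hμ₂re]
    linear_combination (-((α - 1) ^ 2 * I₁ ^ 2 * Φ₁ ^ 2)) * h1'
      + (-(α ^ 2 * I₂ ^ 2 * Φ₂ ^ 2)) * h2'
  rw [key]
end

section
/- For quaternion matrices X (M×N), W (M×P) and a real matrix H (P×N), the real-valued function H ↦ ‖X − W·H‖²_F has gradient with respect to H equal to −2·Re[Wᵀ·conj(X − W·H)], where Re and conj are applied entrywise and ᵀ is the transpose. In particular, if Re[Wᵀ·conj(W)] is invertible, the unique minimizer over all real matrices H is H⋆ = (Re[Wᵀ·conj(W)])⁻¹·Re[Wᵀ·conj(X)]. -/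
/-!
For the real inner product `⟪a, b⟫ = Re (a * star b)` on `ℍ`, the adjoint of the `ℝ`-linear map
`D ↦ W * D` (real `D`) is `A ↦ Re (Wᵀ * conj A)`. Hence
`‖X - W (H + D)‖² = ‖X - W H‖² - 2 ⟪Re (Wᵀ conj (X - W H)), D⟫ + ‖W D‖²`,
which gives the gradient. At `H⋆ = (Re (Wᵀ conj W))⁻¹ Re (Wᵀ conj X)` the linear term vanishes
(normal equations), so `‖X - W H‖² = ‖X - W H⋆‖² + ‖W (H - H⋆)‖²`; equality forces `W (H - H⋆) = 0`,
hence `Re (Wᵀ conj W) (H - H⋆) = 0` and `H = H⋆`.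
-/

open Quaternion

open Finset
open scoped Matrix RealInnerProductSpace

variable {l m n p : Type*}

lemma map_algebraMap_smul {R A : Type*} [CommSemiring R] [Semiring A] [Algebra R A] (t : R)
    (K : Matrix p n R) : (t • K).map (algebraMap R A) = t • K.map (algebraMap R A) :=
  Matrix.map_smul _ t (fun a => (Algebra.linearMap R A).map_smul t a) K

section Frobenius

variable [Fintype m] [Fintype n] {E : Type*} [NormedAddCommGroup E]

def frobeniusNormSq (A : Matrix m n E) : ℝ := ∑ i, ∑ j, ‖A i j‖ ^ 2

lemma frobeniusNormSq_eq_zero_iff {A : Matrix m n E} : frobeniusNormSq A = 0 ↔ A = 0 := by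
  simp only [frobeniusNormSq, ← Matrix.ext_iff, Matrix.zero_apply]
  rw [Fintype.sum_eq_zero_iff_of_nonneg (fun _ => by positivity)]
  refine funext_iff.trans (forall_congr' fun i => ?_)
  rw [Pi.zero_apply, Fintype.sum_eq_zero_iff_of_nonneg (fun _ => by positivity)]
  simp [funext_iff]

lemma frobeniusNormSq_nonneg (A : Matrix m n E) : 0 ≤ frobeniusNormSq A := by
  unfold frobeniusNormSq
  positivity

variable [InnerProductSpace ℝ E]

def frobeniusInner (A B : Matrix m n E) : ℝ := ∑ i, ∑ j, ⟪A i j, B i j⟫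

lemma frobeniusNormSq_sub (A B : Matrix m n E) :
    frobeniusNormSq (A - B) = frobeniusNormSq A - 2 * frobeniusInner A B + frobeniusNormSq B := by
  simp only [frobeniusNormSq, frobeniusInner, Matrix.sub_apply, norm_sub_sq_real, sum_add_distrib,
    sum_sub_distrib, mul_sum]

lemma frobeniusNormSq_smul (t : ℝ) (A : Matrix m n E) :
    frobeniusNormSq (t • A) = t ^ 2 * frobeniusNormSq A := by
  simp only [frobeniusNormSq, Matrix.smul_apply, norm_smul, mul_pow, Real.norm_eq_abs, sq_abs,
    mul_sum]

lemma frobeniusInner_zero_left (B : Matrix m n E) : frobeniusInner 0 B = 0 := by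
  simp [frobeniusInner]

lemma frobeniusInner_smul_left (t : ℝ) (A B : Matrix m n E) :
    frobeniusInner (t • A) B = t * frobeniusInner A B := by
  simp only [frobeniusInner, Matrix.smul_apply, real_inner_smul_left, mul_sum]

lemma frobeniusInner_smul_right (t : ℝ) (A B : Matrix m n E) :
    frobeniusInner A (t • B) = t * frobeniusInner A B := by
  simp only [frobeniusInner, Matrix.smul_apply, real_inner_smul_right, mul_sum]

lemma frobeniusInner_eq_sum_mul (G V : Matrix m n ℝ) :
    frobeniusInner G V = ∑ i, ∑ j, G i j * V i j := by
  simp [frobeniusInner, mul_comm]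

end Frobenius

section ReCross

variable [Fintype m]

noncomputable def reCross (W : Matrix m p ℍ[ℝ]) (A : Matrix m n ℍ[ℝ]) : Matrix p n ℝ :=
  (Wᵀ * A.map star).map QuaternionAlgebra.re

lemma reCross_apply (W : Matrix m p ℍ[ℝ]) (A : Matrix m n ℍ[ℝ]) (k : p) (j : n) :
    reCross W A k j = ∑ i, ⟪W i k, A i j⟫ :=
  map_sum (QuaternionAlgebra.reₗ (-1 : ℝ) 0 (-1)) _ _

lemma reCross_zero (W : Matrix m p ℍ[ℝ]) : reCross W (0 : Matrix m n ℍ[ℝ]) = 0 := by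
  ext k j
  simp [reCross_apply]

lemma reCross_sub (W : Matrix m p ℍ[ℝ]) (A B : Matrix m n ℍ[ℝ]) :
    reCross W (A - B) = reCross W A - reCross W B := by
  ext k j
  simp only [reCross_apply, Matrix.sub_apply, inner_sub_right, sum_sub_distrib]

lemma inner_mul_algebraMap (a b : ℍ[ℝ]) (r : ℝ) :
    ⟪a, b * algebraMap ℝ ℍ[ℝ] r⟫ = ⟪a, b⟫ * r := by
  rw [← Algebra.commutes, ← Algebra.smul_def, real_inner_smul_right, mul_comm]

lemma reCross_mul_map_algebraMap [Fintype l] (W : Matrix m p ℍ[ℝ]) (B : Matrix m l ℍ[ℝ])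
    (K : Matrix l n ℝ) :
    reCross W (B * K.map (algebraMap ℝ ℍ[ℝ])) = reCross W B * K := by
  ext k j
  simp only [reCross_apply, Matrix.mul_apply, Matrix.map_apply, inner_sum, inner_mul_algebraMap,
    sum_mul]
  exact sum_comm

lemma frobeniusInner_mul_map_algebraMap [Fintype n] [Fintype p] (A : Matrix m n ℍ[ℝ])
    (W : Matrix m p ℍ[ℝ]) (V : Matrix p n ℝ) :
    frobeniusInner A (W * V.map (algebraMap ℝ ℍ[ℝ])) = frobeniusInner (reCross W A) V := by
  rw [frobeniusInner_eq_sum_mul]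
  simp only [frobeniusInner, reCross_apply, Matrix.mul_apply, Matrix.map_apply, inner_sum,
    inner_mul_algebraMap, sum_mul, real_inner_comm (A _ _)]
  rw [sum_comm_cycle]
  exact sum_congr rfl fun _ _ => sum_comm

lemma reCross_residual_eq_zero [Fintype p] [DecidableEq p] (X : Matrix m n ℍ[ℝ])
    (W : Matrix m p ℍ[ℝ]) (hW : IsUnit (reCross W W)) :
    reCross W (X - W * ((reCross W W)⁻¹ * reCross W X).map (algebraMap ℝ ℍ[ℝ])) = 0 := by
  rw [reCross_sub, reCross_mul_map_algebraMap,
    Matrix.mul_nonsing_inv_cancel_left _ _ ((Matrix.isUnit_iff_isUnit_det _).mp hW), sub_self]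

lemma eq_zero_of_mul_map_algebraMap_eq_zero [Fintype p] [DecidableEq p] {W : Matrix m p ℍ[ℝ]}
    (hW : IsUnit (reCross W W)) {D : Matrix p n ℝ} (h : W * D.map (algebraMap ℝ ℍ[ℝ]) = 0) :
    D = 0 := by
  have hWD : reCross W W * D = 0 := by
    rw [← reCross_mul_map_algebraMap, h, reCross_zero]
  simpa [Matrix.nonsing_inv_mul_cancel_left _ _ ((Matrix.isUnit_iff_isUnit_det _).mp hW)]
    using congrArg ((reCross W W)⁻¹ * ·) hWD

end ReCross

section LeastSquares

variable [Fintype m] [Fintype n] [Fintype p] (X : Matrix m n ℍ[ℝ]) (W : Matrix m p ℍ[ℝ])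

noncomputable def residualNormSq (H : Matrix p n ℝ) : ℝ :=
  frobeniusNormSq (X - W * H.map (algebraMap ℝ ℍ[ℝ]))

lemma residualNormSq_add (H D : Matrix p n ℝ) :
    residualNormSq X W (H + D) = residualNormSq X W H
      - 2 * frobeniusInner (reCross W (X - W * H.map (algebraMap ℝ ℍ[ℝ]))) D
      + frobeniusNormSq (W * D.map (algebraMap ℝ ℍ[ℝ])) := by
  rw [residualNormSq, Matrix.map_add _ (map_add _), Matrix.mul_add, ← sub_sub,
    frobeniusNormSq_sub, frobeniusInner_mul_map_algebraMap, residualNormSq]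

lemma hasDerivAt_residualNormSq_line (H V : Matrix p n ℝ) :
    HasDerivAt (fun t : ℝ => residualNormSq X W (H + t • V))
      (frobeniusInner ((-2 : ℝ) • reCross W (X - W * H.map (algebraMap ℝ ℍ[ℝ]))) V) 0 := by
  rw [frobeniusInner_smul_left]
  set c := frobeniusInner (reCross W (X - W * H.map (algebraMap ℝ ℍ[ℝ]))) V
  set q := frobeniusNormSq (W * V.map (algebraMap ℝ ℍ[ℝ]))
  have hquad : (fun t : ℝ => residualNormSq X W (H + t • V))
      = fun t => residualNormSq X W H + (-2 * c) * t + q * t ^ 2 := by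
    funext t
    rw [residualNormSq_add, frobeniusInner_smul_right, map_algebraMap_smul, Matrix.mul_smul,
      frobeniusNormSq_smul]
    ring
  rw [hquad]
  exact ((((hasDerivAt_id (0 : ℝ)).const_mul (-2 * c)).const_add
    (residualNormSq X W H)).add ((hasDerivAt_pow 2 (0 : ℝ)).const_mul q)).congr_deriv (by simp)

lemma residualNormSq_eq_add_of_reCross_eq_zero {H₀ : Matrix p n ℝ}
    (h : reCross W (X - W * H₀.map (algebraMap ℝ ℍ[ℝ])) = 0) (H : Matrix p n ℝ) :
    residualNormSq X W H
      = residualNormSq X W H₀ + frobeniusNormSq (W * (H - H₀).map (algebraMap ℝ ℍ[ℝ])) := by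
  have := residualNormSq_add X W H₀ (H - H₀)
  rwa [add_sub_cancel, h, frobeniusInner_zero_left, mul_zero, sub_zero] at this

lemma residualNormSq_le_of_isUnit [DecidableEq p] (hW : IsUnit (reCross W W))
    (H : Matrix p n ℝ) :
    residualNormSq X W ((reCross W W)⁻¹ * reCross W X) ≤ residualNormSq X W H := by
  rw [residualNormSq_eq_add_of_reCross_eq_zero X W (reCross_residual_eq_zero X W hW) H]
  exact le_add_of_nonneg_right (frobeniusNormSq_nonneg _)

lemma eq_of_residualNormSq_eq [DecidableEq p] (hW : IsUnit (reCross W W)) {H : Matrix p n ℝ}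
    (h : residualNormSq X W H = residualNormSq X W ((reCross W W)⁻¹ * reCross W X)) :
    H = (reCross W W)⁻¹ * reCross W X := by
  rw [residualNormSq_eq_add_of_reCross_eq_zero X W (reCross_residual_eq_zero X W hW) H,
    add_eq_left, frobeniusNormSq_eq_zero_iff] at h
  exact sub_eq_zero.mp (eq_zero_of_mul_map_algebraMap_eq_zero hW h)

end LeastSquares

theorem stmt_16 (M N P : ℕ)
    (X : Matrix (Fin M) (Fin N) ℍ[ℝ])
    (W : Matrix (Fin M) (Fin P) ℍ[ℝ])
    (f : Matrix (Fin P) (Fin N) ℝ → ℝ)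
    (hf : f = fun H => ∑ m, ∑ n, ‖(X - W * H.map (algebraMap ℝ ℍ[ℝ])) m n‖ ^ 2)
    (G : Matrix (Fin P) (Fin N) ℝ → Matrix (Fin P) (Fin N) ℝ)
    (hG : G = fun H => (-2 : ℝ) •
      ((W.transpose * ((X - W * H.map (algebraMap ℝ ℍ[ℝ])).map star)).map QuaternionAlgebra.re)) :
    (∀ (H V : Matrix (Fin P) (Fin N) ℝ),
      HasDerivAt (fun t : ℝ => f (H + t • V)) (∑ p, ∑ n, G H p n * V p n) 0) ∧
    (IsUnit ((W.transpose * W.map star).map QuaternionAlgebra.re) →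
      ∀ H : Matrix (Fin P) (Fin N) ℝ,
        f (((W.transpose * W.map star).map QuaternionAlgebra.re)⁻¹ *
            ((W.transpose * X.map star).map QuaternionAlgebra.re)) ≤ f H ∧
        (f H = f (((W.transpose * W.map star).map QuaternionAlgebra.re)⁻¹ *
            ((W.transpose * X.map star).map QuaternionAlgebra.re)) →
          H = ((W.transpose * W.map star).map QuaternionAlgebra.re)⁻¹ *
            ((W.transpose * X.map star).map QuaternionAlgebra.re))) := by
  have hf' : f = residualNormSq X W := hf
  have hG' : G = fun H => (-2 : ℝ) • reCross W (X - W * H.map (algebraMap ℝ ℍ[ℝ])) := hG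
  subst hf' hG'
  refine ⟨fun H V => ?_, fun hW H => ⟨residualNormSq_le_of_isUnit X W hW H,
    eq_of_residualNormSq_eq X W hW⟩⟩
  rw [← frobeniusInner_eq_sum_mul]
  exact hasDerivAt_residualNormSq_line X W H V
end
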